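/- arXiv:2012.01413 — 5 statements merged into one kernel-verified Lean document; each statement's English description precedes it below -/
import Mathlib

section
/- Let m ≥ 1 be an integer, L, ε > 0 real, f(t) = (t−L)^m (L+ε−t)^m on [L, L+ε] and 0 otherwise, and F(s) = ∫_L^{L+ε} f(t) e^{−st} dt. Then for every complex s ≠ 0 with Re(s) = σ ≥ 0, |F(s)| ≤ √ε · e^{−σL} · ‖f^{(m)}‖₂ / |s|^m, where ‖f^{(m)}‖₂ is the L² norm of the m-th derivative of f on [L, L+ε]. -/
/-!
On `[L, L + ε]` the function `f` is the polynomial `p = (X - L)^m (L + ε - X)^m`, which vanishes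
to order `m` at both endpoints. Hence `m` integrations by parts against `e^{-st}` leave no boundary
terms and give `s^m F(s) = ∫ p^{(m)}(t) e^{-st} dt`. For `Re s ≥ 0` we have
`|e^{-st}| ≤ e^{-σL}` on the interval, and Cauchy–Schwarz bounds `∫ |p^{(m)}|` by
`√ε ‖p^{(m)}‖₂`.
-/

open MeasureTheory Set Polynomial

theorem integral_abs_le_sqrt_measureReal_mul {α : Type*} [MeasurableSpace α] {μ : Measure α}
    [IsFiniteMeasure μ] {g : α → ℝ} (hg : MemLp g 2 μ) :
    ∫ x, |g x| ∂μ ≤ √(μ.real univ) * (∫ x, g x ^ 2 ∂μ) ^ (1 / 2 : ℝ) := by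
  have hconj : (2 : ℝ).HolderConjugate 2 := .two_two
  have h := integral_mul_le_Lp_mul_Lq_of_nonneg hconj
    (Filter.Eventually.of_forall fun x => abs_nonneg (g x))
    (Filter.Eventually.of_forall fun _ => zero_le_one)
    (by rw [ENNReal.ofReal_ofNat]; exact hg.abs) (memLp_const (1 : ℝ))
  simp only [mul_one, one_pow, integral_const, smul_eq_mul, Real.rpow_two, sq_abs] at h
  rw [Real.sqrt_eq_rpow, mul_comm]
  exact h

theorem intervalIntegral.integral_abs_le_sqrt_mul {g : ℝ → ℝ} (hg : Continuous g) {a b : ℝ}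
    (hab : a ≤ b) :
    ∫ t in a..b, |g t| ≤ √(b - a) * (∫ t in a..b, g t ^ 2) ^ (1 / 2 : ℝ) := by
  have : IsFiniteMeasure (volume.restrict (Ioc a b)) := by
    rw [isFiniteMeasure_restrict]; exact measure_Ioc_lt_top.ne
  have hg2 : MemLp g 2 (volume.restrict (Ioc a b)) :=
    (memLp_two_iff_integrable_sq hg.aestronglyMeasurable).2
      ((hg.pow 2).integrableOn_Icc.mono_set Ioc_subset_Icc_self)
  simpa [intervalIntegral.integral_of_le hab, Real.volume_real_Ioc_of_le hab] using
    integral_abs_le_sqrt_measureReal_mul hg2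

theorem norm_integral_mul_cexp_le {g : ℝ → ℝ} {a b : ℝ}
    (hg : IntervalIntegrable g volume a b) (hab : a ≤ b) {s : ℂ} (hs : 0 ≤ s.re) :
    ‖∫ t in a..b, (g t : ℂ) * Complex.exp (-s * t)‖
      ≤ Real.exp (-s.re * a) * ∫ t in a..b, |g t| := by
  rw [← intervalIntegral.integral_const_mul]
  refine intervalIntegral.norm_integral_le_of_norm_le hab
    (Filter.Eventually.of_forall fun t ht => ?_) (hg.abs.const_mul _)
  have hre : (-s * (t : ℂ)).re = -s.re * t := by simp [Complex.mul_re]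
  rw [norm_mul, Complex.norm_real, Real.norm_eq_abs, Complex.norm_exp, hre, mul_comm]
  exact mul_le_mul_of_nonneg_right (Real.exp_le_exp.mpr (by nlinarith [ht.1])) (abs_nonneg _)

theorem norm_integral_mul_cexp_le_sqrt_mul {g : ℝ → ℝ} (hg : Continuous g) {a b : ℝ}
    (hab : a ≤ b) {s : ℂ} (hs : 0 ≤ s.re) :
    ‖∫ t in a..b, (g t : ℂ) * Complex.exp (-s * t)‖
      ≤ √(b - a) * Real.exp (-s.re * a) * (∫ t in a..b, g t ^ 2) ^ (1 / 2 : ℝ) :=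
  calc _ ≤ Real.exp (-s.re * a) * ∫ t in a..b, |g t| :=
        norm_integral_mul_cexp_le (hg.intervalIntegrable _ _) hab hs
    _ ≤ Real.exp (-s.re * a) * (√(b - a) * (∫ t in a..b, g t ^ 2) ^ (1 / 2 : ℝ)) := by
        gcongr
        exact intervalIntegral.integral_abs_le_sqrt_mul hg hab
    _ = _ := by ring

theorem integral_deriv_mul_cexp_eq {u u' : ℝ → ℂ} {a b : ℝ}
    (hu : ∀ x ∈ uIcc a b, HasDerivAt u (u' x) x) (hu' : IntervalIntegrable u' volume a b)
    (ha : u a = 0) (hb : u b = 0) (s : ℂ) :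
    ∫ t in a..b, u' t * Complex.exp (-s * t) = s * ∫ t in a..b, u t * Complex.exp (-s * t) := by
  have hexp : ∀ x : ℝ, HasDerivAt (fun t : ℝ => Complex.exp (-s * t))
      (Complex.exp (-s * x) * -s) x := fun x => by
    simpa using ((Complex.ofRealCLM.hasDerivAt (x := x)).const_mul (-s)).cexp
  have h := intervalIntegral.integral_mul_deriv_eq_deriv_mul hu (fun x _ => hexp x) hu'
    ((by fun_prop : Continuous fun t : ℝ => Complex.exp (-s * t) * -s).intervalIntegrable _ _)
  simp only [ha, hb, zero_mul, sub_zero, zero_sub, ← mul_assoc] at h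
  rw [intervalIntegral.integral_mul_const] at h
  linear_combination h

theorem isRoot_iterate_derivative_of_pow_dvd {R : Type*} [CommRing R] {p : R[X]} {a : R}
    {m k : ℕ} (h : (X - C a) ^ m ∣ p) (hk : k < m) : (derivative^[k] p).IsRoot a :=
  dvd_iff_isRoot.mp <| (dvd_pow_self _ (Nat.sub_ne_zero_of_lt hk)).trans
    (pow_sub_dvd_iterate_derivative_of_pow_dvd k h)

theorem Polynomial.iteratedDeriv_eval (p : ℝ[X]) (k : ℕ) :
    iteratedDeriv k (fun x => p.eval x) = fun x => (derivative^[k] p).eval x := by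
  induction k with
  | zero => simp
  | succ k ih =>
    ext x
    rw [iteratedDeriv_succ, ih, Function.iterate_succ_apply']
    exact Polynomial.deriv _

theorem Polynomial.iteratedDeriv_eqOn {f : ℝ → ℝ} {p : ℝ[X]} {U : Set ℝ} (hU : IsOpen U)
    (h : EqOn f (fun x => p.eval x) U) (k : ℕ) :
    EqOn (iteratedDeriv k f) (fun x => (derivative^[k] p).eval x) U := fun x hx => by
  have hfp : f =ᶠ[nhds x] fun x => p.eval x := Filter.eventuallyEq_of_mem (hU.mem_nhds hx) h
  rw [hfp.iteratedDeriv_eq, p.iteratedDeriv_eval]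

theorem integral_iterate_derivative_mul_cexp {p : ℝ[X]} {a b : ℝ} {m : ℕ}
    (ha : (X - C a) ^ m ∣ p) (hb : (X - C b) ^ m ∣ p) (s : ℂ) :
    ∫ t in a..b, (((derivative^[m] p).eval t : ℝ) : ℂ) * Complex.exp (-s * t)
      = s ^ m * ∫ t in a..b, ((p.eval t : ℝ) : ℂ) * Complex.exp (-s * t) := by
  suffices ∀ k ≤ m, ∫ t in a..b, (((derivative^[k] p).eval t : ℝ) : ℂ) * Complex.exp (-s * t)
      = s ^ k * ∫ t in a..b, ((p.eval t : ℝ) : ℂ) * Complex.exp (-s * t) from this m le_rfl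
  intro k hk
  induction k with
  | zero => simp
  | succ k ih =>
    have hderiv (x : ℝ) : HasDerivAt (fun t : ℝ => (((derivative^[k] p).eval t : ℝ) : ℂ))
        (((derivative^[k + 1] p).eval x : ℝ) : ℂ) x := by
      rw [Function.iterate_succ_apply']
      exact ((derivative^[k] p).hasDerivAt x).ofReal_comp
    rw [integral_deriv_mul_cexp_eq (fun x _ => hderiv x)
      ((Complex.continuous_ofReal.comp (derivative^[k + 1] p).continuous).intervalIntegrable
        _ _)
      (by simpa using (isRoot_iterate_derivative_of_pow_dvd ha hk).eq_zero)
      (by simpa using (isRoot_iterate_derivative_of_pow_dvd hb hk).eq_zero), ih (by omega),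
      pow_succ', mul_assoc]

theorem stmt_5_general (m : ℕ) (L ε : ℝ) (hε : 0 < ε)
    (f : ℝ → ℝ)
    (hf : ∀ t, f t = if t ∈ Set.Icc L (L + ε) then (t - L) ^ m * (L + ε - t) ^ m else 0)
    (F : ℂ → ℂ)
    (hF : ∀ s, F s = ∫ t in L..(L + ε), (f t : ℂ) * Complex.exp (-s * t)) :
    ∀ s : ℂ, s ≠ 0 → 0 ≤ s.re →
      ‖F s‖ ≤ Real.sqrt ε * Real.exp (-s.re * L)
          * (∫ t in L..(L + ε), (iteratedDeriv m f t) ^ 2) ^ ((1 : ℝ) / 2) / ‖s‖ ^ m := by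
  intro s hs hσ
  set b := L + ε
  have hLb : L ≤ b := by linarith
  set p : ℝ[X] := (X - C L) ^ m * (C b - X) ^ m
  have hfp : EqOn f (fun t => p.eval t) (Icc L b) := fun t ht => by simp [hf, ht, p]
  have hFp : F s = ∫ t in L..b, ((p.eval t : ℝ) : ℂ) * Complex.exp (-s * t) :=
    (hF s).trans (intervalIntegral.integral_congr fun t ht => by
      rw [hfp (uIcc_of_le hLb ▸ ht)])
  have hf_sq : ∫ t in L..b, iteratedDeriv m f t ^ 2
      = ∫ t in L..b, (derivative^[m] p).eval t ^ 2 :=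
    intervalIntegral.integral_congr_Ioo_of_le hLb fun t ht => by
      rw [p.iteratedDeriv_eqOn isOpen_Ioo (hfp.mono Ioo_subset_Icc_self) m ht]
  have hIBP := integral_iterate_derivative_mul_cexp (p := p) (dvd_mul_right _ _)
    (dvd_mul_of_dvd_right (pow_dvd_pow_of_dvd ⟨-1, by ring⟩ m) _) s
  rw [← hFp, mul_comm] at hIBP
  rw [eq_div_of_mul_eq (pow_ne_zero m hs) hIBP.symm, norm_div, norm_pow, hf_sq,
    show ε = b - L by ring]
  gcongr
  exact norm_integral_mul_cexp_le_sqrt_mul (derivative^[m] p).continuous hLb hσ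

theorem stmt_5 (m : ℕ) (hm : 1 ≤ m) (L ε : ℝ) (hL : 0 < L) (hε : 0 < ε)
    (f : ℝ → ℝ)
    (hf : ∀ t, f t = if t ∈ Set.Icc L (L + ε) then (t - L) ^ m * (L + ε - t) ^ m else 0)
    (F : ℂ → ℂ)
    (hF : ∀ s, F s = ∫ t in L..(L + ε), (f t : ℂ) * Complex.exp (-s * t)) :
    ∀ s : ℂ, s ≠ 0 → 0 ≤ s.re →
      ‖F s‖ ≤ Real.sqrt ε * Real.exp (-s.re * L)
          * (∫ t in L..(L + ε), (iteratedDeriv m f t) ^ 2) ^ ((1 : ℝ) / 2) / ‖s‖ ^ m :=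
  stmt_5_general m L ε hε f hf F hF
end

section
/- Let m be a positive integer and f(t) = (t−L)^m (L+ε−t)^m on [L, L+ε], 0 otherwise. Then the ratio ‖f^{(m)}‖₂ / ‖f‖₁ = μ_m / ε^{m+1/2}, where μ_m = (2m+1)! / (m! √(2m+1)). -/
/-!
On `(L, L + ε)` the function `f` is the polynomial `P = (X - L)^m (L + ε - X)^m`, which vanishes
to order `m` at both endpoints. Integrating by parts `m` times therefore produces no boundary
terms: `∫ (P^(m))² = (-1)^m ∫ P^(2m) P = (2m)! ∫ P`, because `P^(2m)` is the constant
`(-1)^m (2m)!`. Hence both norms are Beta integrals, `∫ P = (m!)² ε^(2m+1) / (2m+1)!`,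
and the ratio is read off.
-/

open Polynomial intervalIntegral
open scoped Nat

theorem integral_pow_mul_one_sub_pow (j k : ℕ) :
    ∫ x in (0 : ℝ)..1, x ^ j * (1 - x) ^ k = j ! * k ! / (j + k + 1)! := by
  apply Complex.ofReal_injective
  have hbeta := Complex.betaIntegral_eq_Gamma_mul_div (j + 1) (k + 1)
    (by simp; positivity) (by simp; positivity)
  rw [show (j + 1 : ℂ) + (k + 1) = (j + k + 1 : ℕ) + 1 by push_cast; ring,
    Complex.Gamma_nat_eq_factorial, Complex.Gamma_nat_eq_factorial,
    Complex.Gamma_nat_eq_factorial, Complex.betaIntegral] at hbeta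
  simp only [add_sub_cancel_right, Complex.cpow_natCast] at hbeta
  push_cast
  rw [← hbeta, ← intervalIntegral.integral_ofReal]
  push_cast
  rfl

theorem integral_sub_pow_mul_sub_pow (a b : ℝ) (j k : ℕ) :
    ∫ x in a..b, (x - a) ^ j * (b - x) ^ k
      = j ! * k ! / (j + k + 1)! * (b - a) ^ (j + k + 1) := by
  have hscale := smul_integral_comp_add_mul (fun x => (x - a) ^ j * (b - x) ^ k) (b - a) a
    (a := 0) (b := 1)
  simp only [mul_zero, add_zero, mul_one, add_sub_cancel, smul_eq_mul] at hscale
  rw [← hscale]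
  have hsubst : ∀ x : ℝ, (a + (b - a) * x - a) ^ j * (b - (a + (b - a) * x)) ^ k
      = (b - a) ^ (j + k) * (x ^ j * (1 - x) ^ k) := fun x => by
    rw [show a + (b - a) * x - a = (b - a) * x by ring,
      show b - (a + (b - a) * x) = (b - a) * (1 - x) by ring, mul_pow, mul_pow]
    ring
  simp only [hsubst, integral_const_mul, integral_pow_mul_one_sub_pow]
  ring

namespace Polynomial

theorem iterate_derivative_natDegree {R : Type*} [Semiring R] (p : R[X]) :
    derivative^[p.natDegree] p = C (p.natDegree ! • p.leadingCoeff) := by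
  have hdeg : (derivative^[p.natDegree] p).natDegree ≤ 0 :=
    (natDegree_iterate_derivative p _).trans (Nat.sub_self _).le
  rw [eq_C_of_natDegree_le_zero hdeg, coeff_iterate_derivative, zero_add,
    Nat.descFactorial_self, leadingCoeff]

variable {𝕜 : Type*} [NontriviallyNormedField 𝕜]

theorem iteratedDeriv_eval_s6 (p : 𝕜[X]) (n : ℕ) :
    iteratedDeriv n (fun x => p.eval x) = fun x => (derivative^[n] p).eval x := by
  induction n generalizing p with
  | zero => simp
  | succ n ih =>
    have hderiv : _root_.deriv (fun x => p.eval x) = fun x => (derivative p).eval x := by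
      ext; exact p.deriv
    rw [iteratedDeriv_succ', hderiv, ih, Function.iterate_succ_apply]

theorem iteratedDeriv_eq_eval_of_eqOn {f : 𝕜 → 𝕜} {p : 𝕜[X]} {s : Set 𝕜} (hs : IsOpen s)
    (hf : s.EqOn f fun x => p.eval x) {x : 𝕜} (hx : x ∈ s) (n : ℕ) :
    iteratedDeriv n f x = (derivative^[n] p).eval x := by
  rw [(Filter.eventuallyEq_of_mem (hs.mem_nhds hx) hf).iteratedDeriv_eq, iteratedDeriv_eval_s6]

theorem eval_iterate_derivative_eq_zero_of_pow_dvd {R : Type*} [CommRing R] {p : R[X]} {c : R}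
    {n : ℕ} (h : (X - C c) ^ (n + 1) ∣ p) : (derivative^[n] p).eval c = 0 := by
  have := pow_sub_dvd_iterate_derivative_of_pow_dvd n h
  rwa [Nat.add_sub_cancel_left, pow_one, dvd_iff_isRoot] at this

theorem integral_eval_mul_iterate_derivative_of_pow_dvd {a b : ℝ} {n : ℕ} {p : ℝ[X]}
    (ha : (X - C a) ^ n ∣ p) (hb : (X - C b) ^ n ∣ p) (q : ℝ[X]) :
    ∫ x in a..b, q.eval x * (derivative^[n] p).eval x
      = (-1) ^ n * ∫ x in a..b, (derivative^[n] q).eval x * p.eval x := by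
  induction n generalizing q with
  | zero => simp
  | succ n ih =>
    have hibp := integral_mul_deriv_eq_deriv_mul (a := a) (b := b)
      (fun x _ => q.hasDerivAt x) (fun x _ => (derivative^[n] p).hasDerivAt x)
      ((derivative q).continuous.intervalIntegrable _ _)
      ((derivative (derivative^[n] p)).continuous.intervalIntegrable _ _)
    rw [Function.iterate_succ_apply', hibp, eval_iterate_derivative_eq_zero_of_pow_dvd ha,
      eval_iterate_derivative_eq_zero_of_pow_dvd hb,
      ih ((pow_dvd_pow _ n.le_succ).trans ha) ((pow_dvd_pow _ n.le_succ).trans hb),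
      Function.iterate_succ_apply]
    ring

variable {R : Type*} [CommRing R]

noncomputable def bumpPoly (a b : R) (m : ℕ) : R[X] := (X - C a) ^ m * (C b - X) ^ m

@[simp]
theorem eval_bumpPoly (a b x : R) (m : ℕ) :
    (bumpPoly a b m).eval x = (x - a) ^ m * (b - x) ^ m := by
  simp [bumpPoly]

theorem bumpPoly_eq_C_mul_pow (a b : R) (m : ℕ) :
    bumpPoly a b m = C ((-1) ^ m) * ((X - C a) * (X - C b)) ^ m := by
  rw [bumpPoly, show (C b - X : R[X]) = C (-1) * (X - C b) by simp, mul_pow, mul_pow, C_pow]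
  ring

theorem iterate_derivative_two_mul_bumpPoly [Nontrivial R] (a b : R) (m : ℕ) :
    derivative^[2 * m] (bumpPoly a b m) = C ((-1) ^ m * (2 * m)! : R) := by
  have hmonic : ((X - C a) * (X - C b)).Monic := (monic_X_sub_C a).mul (monic_X_sub_C b)
  have hdeg : (((X - C a) * (X - C b)) ^ m).natDegree = 2 * m := by
    rw [hmonic.natDegree_pow, (monic_X_sub_C a).natDegree_mul (monic_X_sub_C b), natDegree_X_sub_C,
      natDegree_X_sub_C, mul_comm]
  rw [bumpPoly_eq_C_mul_pow, iterate_derivative_C_mul, ← hdeg, iterate_derivative_natDegree,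
    (hmonic.pow m).leadingCoeff, hdeg, ← C_mul, nsmul_eq_mul, mul_one]

theorem pow_dvd_bumpPoly_left (a b : R) (m : ℕ) : (X - C a) ^ m ∣ bumpPoly a b m :=
  dvd_mul_right _ _

theorem pow_dvd_bumpPoly_right (a b : R) (m : ℕ) : (X - C b) ^ m ∣ bumpPoly a b m :=
  dvd_mul_of_dvd_right (pow_dvd_pow_of_dvd (Dvd.intro (-1) (by ring)) m) _

end Polynomial

theorem integral_sq_eval_iterate_derivative_bumpPoly (a b : ℝ) (m : ℕ) :
    ∫ x in a..b, ((derivative^[m] (bumpPoly a b m)).eval x) ^ 2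
      = (m ! : ℝ) ^ 2 / (2 * m + 1) * (b - a) ^ (2 * m + 1) := by
  have hibp := integral_eval_mul_iterate_derivative_of_pow_dvd (pow_dvd_bumpPoly_left a b m)
    (pow_dvd_bumpPoly_right a b m) (derivative^[m] (bumpPoly a b m))
  rw [← Function.iterate_add_apply, ← two_mul, iterate_derivative_two_mul_bumpPoly] at hibp
  simp only [sq, hibp, eval_C, eval_bumpPoly, integral_const_mul, integral_sub_pow_mul_sub_pow]
  rw [← two_mul, Nat.factorial_succ]
  push_cast
  field_simp
  rw [← pow_mul, Even.neg_one_pow ⟨m, by ring⟩, one_mul]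

theorem stmt_6_general (m : ℕ) (L ε : ℝ) (hε : 0 < ε)
    (f : ℝ → ℝ)
    (hf : ∀ t, f t = if t ∈ Set.Icc L (L + ε) then (t - L) ^ m * (L + ε - t) ^ m else 0) :
    (∫ t in L..(L + ε), (iteratedDeriv m f t) ^ 2) ^ ((1 : ℝ) / 2)
        / (∫ t in L..(L + ε), f t)
      = ((Nat.factorial (2 * m + 1) : ℝ)
          / ((Nat.factorial m : ℝ) * Real.sqrt (2 * m + 1)))
        / ε ^ ((m : ℝ) + 1 / 2) := by
  have hle : L ≤ L + ε := le_add_of_nonneg_right hε.le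
  have hf_eq : (Set.Ioo L (L + ε)).EqOn f fun t => (bumpPoly L (L + ε) m).eval t :=
    fun t ht => by simp only [hf, if_pos (Set.Ioo_subset_Icc_self ht), eval_bumpPoly]
  have hmass : ∫ t in L..(L + ε), f t = m ! * m ! / (2 * m + 1)! * ε ^ (2 * m + 1) := by
    rw [integral_congr_Ioo_of_le hle hf_eq]
    simp only [eval_bumpPoly, integral_sub_pow_mul_sub_pow, add_sub_cancel_left, two_mul]
  have henergy : ∫ t in L..(L + ε), (iteratedDeriv m f t) ^ 2
      = (m ! : ℝ) ^ 2 / (2 * m + 1) * ε ^ (2 * m + 1) := by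
    rw [integral_congr_Ioo_of_le hle
      fun t ht => by rw [iteratedDeriv_eq_eval_of_eqOn isOpen_Ioo hf_eq ht],
      integral_sq_eval_iterate_derivative_bumpPoly, add_sub_cancel_left]
  have hsq : ε ^ (2 * m + 1) = (ε ^ ((m : ℝ) + 1 / 2)) ^ 2 := by
    rw [← Real.rpow_natCast, ← Real.rpow_mul_natCast hε.le]
    push_cast; ring_nf
  rw [hmass, henergy, hsq, ← Real.sqrt_eq_rpow, Real.sqrt_mul (by positivity),
    Real.sqrt_div (sq_nonneg _), Real.sqrt_sq (by positivity),
    Real.sqrt_sq (by positivity), Nat.factorial_succ]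
  push_cast
  field_simp

theorem stmt_6 (m : ℕ) (hm : 0 < m) (L ε : ℝ) (hL : 0 < L) (hε : 0 < ε)
    (f : ℝ → ℝ)
    (hf : ∀ t, f t = if t ∈ Set.Icc L (L + ε) then (t - L) ^ m * (L + ε - t) ^ m else 0) :
    (∫ t in L..(L + ε), (iteratedDeriv m f t) ^ 2) ^ ((1 : ℝ) / 2)
        / (∫ t in L..(L + ε), f t)
      = ((Nat.factorial (2 * m + 1) : ℝ)
          / ((Nat.factorial m : ℝ) * Real.sqrt (2 * m + 1)))
        / ε ^ ((m : ℝ) + 1 / 2) :=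
  stmt_6_general m L ε hε f hf
end

section
/- For all real x ≥ 2, the sum over primes p ≤ x of log p / (p − 1) is at most 2 log x. -/
/-!
Split `log p / (p - 1) = log p / p + log p / (p (p - 1))`. Since `p ^ ⌊n/p⌋ ∣ n!`, comparing with
`log n! ≤ n log n` and Chebyshev's `θ n ≤ n log 4` gives `∑_{p ≤ n} log p / p ≤ log n + log 4`
(Mertens); the second part is at most `∑_{m ≥ 2} log m / (m (m - 1)) ≤ log 2 + 1`, which
telescopes against `(log m + 1) / (m - 1)`. Hence the sum is at most `log x + 3 log 2 + 1`, which is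
`≤ 2 log x` as soon as `x ≥ 8e`. For `x < 22` every term is at most `log 2`, and `2 ^ π(n) ≤ n²`
is checked directly.
-/

open Finset Real
open Nat (primesLE)
open scoped Nat

theorem div_le_factorization_factorial {n p : ℕ} (hp : p.Prime) :
    n / p ≤ (n !).factorization p := by
  rw [Nat.factorization_factorial hp (lt_add_one (Nat.log p n))]
  rcases lt_or_ge n p with hnp | hpn
  · simp [Nat.div_eq_of_lt hnp]
  · have h1 : 1 ∈ Ico 1 (Nat.log p n + 1) := by
      simpa using Nat.log_pos hp.one_lt hpn
    simpa using single_le_sum (f := fun i => n / p ^ i) (fun _ _ => Nat.zero_le _) h1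

theorem sum_primesLE_div_mul_log_le_log_factorial (n : ℕ) :
    ∑ p ∈ primesLE n, ((n / p : ℕ) : ℝ) * log p ≤ log (n ! : ℕ) := by
  have hsupp : (n !).factorization.support ⊆ primesLE n := fun p hp => by
    have hp' := Nat.prime_of_mem_primeFactors hp
    simpa [Nat.mem_primesLE, hp', hp'.dvd_factorial] using Nat.dvd_of_mem_primeFactors hp
  rw [log_nat_eq_sum_factorization, Finsupp.sum_of_support_subset _ hsupp _ (by simp)]
  refine sum_le_sum fun p hp => ?_
  have hp' : p.Prime := (Nat.mem_primesLE.1 hp).2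
  gcongr
  exact div_le_factorization_factorial hp'

theorem sum_primesLE_log_div_le (n : ℕ) :
    ∑ p ∈ primesLE n, log p / p ≤ log n + log 4 := by
  rcases n.eq_zero_or_pos with rfl | hn
  · simp only [Nat.primesLE_zero, sum_empty, Nat.cast_zero, log_zero, zero_add]
    positivity
  have hn' : (0 : ℝ) < n := by exact_mod_cast hn
  rw [← mul_le_mul_iff_right₀ hn']
  calc (n : ℝ) * ∑ p ∈ primesLE n, log p / p
      ≤ ∑ p ∈ primesLE n, (((n / p : ℕ) : ℝ) * log p + log p) := by
        rw [mul_sum]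
        gcongr with p hp
        have hlog : 0 ≤ log p := log_natCast_nonneg p
        calc (n : ℝ) * (log p / p) = ((n : ℝ) / p - 1) * log p + log p := by ring
          _ ≤ _ := by
            gcongr
            rw [← Nat.floor_div_eq_div (K := ℝ)]
            exact (Nat.sub_one_lt_floor _).le
    _ = ∑ p ∈ primesLE n, ((n / p : ℕ) : ℝ) * log p + Chebyshev.theta n := by
        rw [sum_add_distrib, Chebyshev.theta_eq_sum_primesLE_log]
    _ ≤ log (n ! : ℕ) + log 4 * n := by
        gcongr
        · exact sum_primesLE_div_mul_log_le_log_factorial n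
        · exact Chebyshev.theta_le_log4_mul_x n.cast_nonneg
    _ ≤ n * log n + log 4 * n := by
        gcongr
        rw [← log_pow]
        gcongr
        exact_mod_cast n.factorial_le_pow
    _ = n * (log n + log 4) := by ring

theorem log_div_mul_sub_one_le {t : ℝ} (ht : 1 < t) :
    log t / (t * (t - 1)) ≤ (log t + 1) / (t - 1) - (log (t + 1) + 1) / t := by
  have ht0 : 0 < t := by linarith
  have ht1 : 0 < t - 1 := by linarith
  have hlog : t * (log (t + 1) - log t) ≤ 1 := by
    rw [← log_div (by linarith) ht0.ne']
    calc t * log ((t + 1) / t) ≤ t * ((t + 1) / t - 1) := by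
          gcongr; exact log_le_sub_one_of_pos (by positivity)
      _ = 1 := by field_simp; ring
  have hmono : 0 ≤ log (t + 1) - log t := sub_nonneg.2 (log_le_log ht0 (by linarith))
  rw [div_sub_div _ _ ht1.ne' ht0.ne', mul_comm t, div_le_div_iff_of_pos_right (by positivity)]
  nlinarith

theorem sum_Icc_log_div_mul_sub_one_le (N : ℕ) :
    ∑ n ∈ Icc 2 N, log n / (n * (n - 1)) ≤ log 2 + 1 := by
  rcases lt_or_ge N 2 with hN | hN
  · rw [Icc_eq_empty_of_lt hN, sum_empty]
    positivity
  set g : ℕ → ℝ := fun n => (log n + 1) / (n - 1)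
  have hg : 0 ≤ g (N + 1) :=
    div_nonneg (by linarith [log_natCast_nonneg (N + 1)])
      (by push_cast; linarith [N.cast_nonneg (α := ℝ)])
  calc ∑ n ∈ Icc 2 N, log n / (n * (n - 1))
      ≤ ∑ n ∈ Icc 2 N, -(g (n + 1) - g n) := sum_le_sum fun n hn => by
        have hn1 : (1 : ℝ) < n := by exact_mod_cast (mem_Icc.1 hn).1
        simpa [g] using log_div_mul_sub_one_le hn1
    _ = g 2 - g (N + 1) := by rw [sum_neg_distrib, sum_Icc_sub (by omega)]; ring
    _ ≤ g 2 := by linarith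
    _ = log 2 + 1 := by norm_num [g]

theorem log_div_sub_one_le_log_two : ∀ n : ℕ, log n / (n - 1) ≤ log 2
  | 0 | 1 => by simpa using log_nonneg one_le_two
  | n + 2 => by
    have hpow : ((n + 2 : ℕ) : ℝ) ≤ 2 ^ (n + 1) := by exact_mod_cast (n + 1).lt_two_pow_self
    rw [div_le_iff₀ (by push_cast; linarith)]
    calc log ((n + 2 : ℕ) : ℝ) ≤ log (2 ^ (n + 1)) := log_le_log (by positivity) hpow
      _ = log 2 * ((n + 2 : ℕ) - 1) := by rw [log_pow]; push_cast; ring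

theorem two_pow_card_primesLE_le_sq : ∀ n ≤ 21, 1 ≤ n → 2 ^ #(primesLE n) ≤ n ^ 2 := by
  decide

theorem sum_primesLE_log_div_sub_one_le_two_mul_log {n : ℕ} (hn : 1 ≤ n) (hn21 : n ≤ 21) :
    ∑ p ∈ primesLE n, log p / (p - 1) ≤ 2 * log n := by
  calc ∑ p ∈ primesLE n, log p / (p - 1) ≤ #(primesLE n) * log 2 :=
        (sum_le_card_nsmul _ _ _ fun p _ => log_div_sub_one_le_log_two p).trans_eq
          (nsmul_eq_mul _ _)
    _ = log ((2 ^ #(primesLE n) : ℕ) : ℝ) := by push_cast; rw [log_pow]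
    _ ≤ log ((n ^ 2 : ℕ) : ℝ) :=
        log_le_log (by positivity) (by exact_mod_cast two_pow_card_primesLE_le_sq n hn21 hn)
    _ = 2 * log n := by push_cast; rw [log_pow]; norm_num

theorem sum_primesLE_log_div_sub_one_le (n : ℕ) :
    ∑ p ∈ primesLE n, log p / (p - 1) ≤ log n + (3 * log 2 + 1) := by
  have hsplit : ∀ p ∈ primesLE n, log p / (p - 1) = log p / p + log p / (p * (p - 1)) := by
    intro p hp
    have hp2 : (2 : ℝ) ≤ p := by exact_mod_cast Nat.two_le_of_mem_primesLE hp
    have hp1 : (p : ℝ) - 1 ≠ 0 := by linarith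
    field_simp
    ring
  have hsub : primesLE n ⊆ Icc 2 n := by
    rw [Nat.primesLE_eq_filter_Icc_two]; exact filter_subset _ _
  have hnonneg : ∀ m ∈ Icc 2 n, 0 ≤ log m / (m * (m - 1) : ℝ) := by
    intro m hm
    have hm2 : (2 : ℝ) ≤ m := by exact_mod_cast (mem_Icc.1 hm).1
    exact div_nonneg (log_nonneg (by linarith)) (by nlinarith)
  calc ∑ p ∈ primesLE n, log p / (p - 1)
      = ∑ p ∈ primesLE n, log p / p + ∑ p ∈ primesLE n, log p / (p * (p - 1)) := by
        rw [sum_congr rfl hsplit, sum_add_distrib]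
    _ ≤ (log n + log 4) + (log 2 + 1) := by
        gcongr
        · exact sum_primesLE_log_div_le n
        · exact (sum_le_sum_of_subset_of_nonneg hsub fun m hm _ => hnonneg m hm).trans
            (sum_Icc_log_div_mul_sub_one_le n)
    _ = log n + (3 * log 2 + 1) := by
        rw [show (4 : ℝ) = 2 ^ 2 by norm_num, log_pow]; push_cast; ring

theorem stmt_15 (x : ℝ) (hx : 2 ≤ x) :
    ∑ p ∈ Finset.filter Nat.Prime (Finset.Icc 2 ⌊x⌋₊),
      Real.log p / ((p : ℝ) - 1) ≤ 2 * Real.log x := by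
  rw [← Nat.primesLE_eq_filter_Icc_two]
  have hN : 1 ≤ ⌊x⌋₊ := Nat.le_floor (by norm_num; linarith)
  have hlogN : log ⌊x⌋₊ ≤ log x :=
    log_le_log (by exact_mod_cast hN) (Nat.floor_le (by linarith))
  rcases lt_or_ge x 22 with hx22 | hx22
  · have hN21 : ⌊x⌋₊ ≤ 21 :=
      Nat.le_of_lt_succ ((Nat.floor_lt (by linarith)).2 (by norm_num [hx22]))
    linarith [sum_primesLE_log_div_sub_one_le_two_mul_log hN hN21]
  · -- `log x ≥ log (8e)` because `8e < 22`
    have hlog_x : 3 * log 2 + 1 ≤ log x := by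
      calc 3 * log 2 + 1 = log (8 * exp 1) := by
            rw [log_mul (by norm_num) (exp_pos 1).ne', log_exp,
              show (8 : ℝ) = 2 ^ 3 by norm_num, log_pow]; push_cast; ring
        _ ≤ log x := log_le_log (by positivity) (by linarith [exp_one_lt_d9])
    linarith [sum_primesLE_log_div_sub_one_le ⌊x⌋₊]
end

section
/- Let q ≥ 3 be an integer, a coprime to q, n a positive integer, and for each Dirichlet character χ mod q let χ₁ denote the primitive character inducing χ. Let Q_n be the largest divisor of q coprime to n. Then (1/φ(q)) ∑_{χ mod q} χ₁(n) conj(χ(a)) equals φ(Q_n)/φ(q) if n ≡ a (mod Q_n), and 0 otherwise. -/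
/-!
`χ₁(n)` vanishes unless the conductor of `χ` is coprime to `n`, that is, divides `Q`; those `χ`
are exactly the characters induced from characters `ψ` mod `Q`, and for them `χ₁(n) = ψ(n)` and
`χ(a) = ψ(a)`. The sum is therefore the orthogonality sum `∑_ψ ψ(a)⁻¹ ψ(n)` mod `Q`.
-/

open DirichletCharacter

namespace Nat

theorem dvd_of_forall_dvd_coprime_le {q Q n d : ℕ} (hq : q ≠ 0) (hQ : Q ∣ q)
    (hQn : Q.Coprime n) (hQmax : ∀ d, d ∣ q → d.Coprime n → d ≤ Q)
    (hd : d ∣ q) (hdn : d.Coprime n) : d ∣ Q := by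
  have hlq : lcm d Q ∣ q := Nat.lcm_dvd hd hQ
  have hln : (lcm d Q).Coprime n := Coprime.coprime_dvd_left (lcm_dvd_mul d Q) (hdn.mul_left hQn)
  have hlQ : lcm d Q = Q :=
    le_antisymm (hQmax _ hlq hln) (le_of_dvd (pos_of_dvd_of_pos hlq (pos_of_ne_zero hq))
      (dvd_lcm_right d Q))
  exact hlQ ▸ dvd_lcm_left d Q

end Nat

namespace DirichletCharacter

variable {R : Type*} [CommMonoidWithZero R] {m q : ℕ}

theorem coprime_of_apply_natCast_ne_zero [Nontrivial R] (χ : DirichletCharacter R q) {n : ℕ}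
    (h : χ n ≠ 0) : n.Coprime q := by
  rwa [← Int.cast_natCast, apply_ne_zero_iff, Nat.isCoprime_iff_coprime] at h

theorem changeLevel_apply_natCast_of_coprime (hm : m ∣ q) (ψ : DirichletCharacter R m) {a : ℕ}
    (ha : a.Coprime q) : changeLevel hm ψ a = ψ a := by
  simpa using changeLevel_eq_cast_of_dvd' ψ hm (Nat.isCoprime_iff_coprime.mpr ha)

theorem primitiveCharacter_changeLevel_apply_natCast_of_coprime [Nontrivial R] [NeZero q]
    (hm : m ∣ q) (ψ : DirichletCharacter R m) {n : ℕ} (hn : n.Coprime m) :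
    (changeLevel hm ψ).primitiveCharacter n = ψ n := by
  simpa using (primitiveCharacter_changeLevel_apply hm ψ n).trans
    (primitiveCharacter_apply_of_isCoprime ψ (Nat.isCoprime_iff_coprime.mpr hn))

theorem mem_range_changeLevel_of_conductor_dvd [NeZero q] (hm : m ∣ q)
    {χ : DirichletCharacter R q} (h : χ.conductor ∣ m) : χ ∈ Set.range (changeLevel hm) := by
  obtain ⟨_, ψ, hψ⟩ := χ.factorsThrough_conductor.mono χ h hm
  exact ⟨ψ, hψ.symm⟩

theorem star_apply_eq_apply_inv (ψ : DirichletCharacter ℂ m) {a : ZMod m} (ha : IsUnit a) :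
    star (ψ a) = ψ a⁻¹ := by
  rw [MulChar.star_apply', MulChar.inv_apply, ← ha.unit_spec, Ring.inverse_unit,
    ZMod.inv_coe_unit]

end DirichletCharacter

theorem stmt_16_general (q : ℕ) (hq : 3 ≤ q) (a n : ℕ) (ha : Nat.Coprime a q)
    (Q : ℕ) (hQ : Q ∣ q) (hQn : Nat.Coprime Q n)
    (hQmax : ∀ d, d ∣ q → Nat.Coprime d n → d ≤ Q) :
    (1 / (Nat.totient q : ℂ)) * ∑ χ : DirichletCharacter ℂ q,
        χ.primitiveCharacter (n : ZMod χ.conductor) * (starRingEnd ℂ) (χ (a : ZMod q))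
      = if (n : ZMod Q) = (a : ZMod Q)
          then (Nat.totient Q : ℂ) / (Nat.totient q : ℂ) else 0 := by
  have : NeZero q := ⟨by omega⟩
  have : NeZero Q := ⟨ne_zero_of_dvd_ne_zero (NeZero.ne q) hQ⟩
  have haQ : IsUnit (a : ZMod Q) :=
    (ZMod.isUnit_iff_coprime a Q).mpr (ha.coprime_dvd_right hQ)
  have hsupport (χ : DirichletCharacter ℂ q) (hχ : χ ∉ Set.range (changeLevel hQ)) :
      χ.primitiveCharacter n * starRingEnd ℂ (χ a) = 0 := by
    refine mul_eq_zero_of_left (not_not.mp fun hn ↦ hχ ?_) _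
    refine mem_range_changeLevel_of_conductor_dvd hQ
      (Nat.dvd_of_forall_dvd_coprime_le (NeZero.ne q) hQ hQn hQmax χ.conductor_dvd_level ?_)
    exact (coprime_of_apply_natCast_ne_zero _ hn).symm
  rw [← Fintype.sum_of_injective _ (changeLevel_injective hQ) _ _ hsupport fun _ ↦ rfl]
  simp only [primitiveCharacter_changeLevel_apply_natCast_of_coprime hQ _ hQn.symm,
    changeLevel_apply_natCast_of_coprime hQ _ ha, starRingEnd_apply, star_apply_eq_apply_inv _ haQ]
  rw [Finset.sum_congr rfl fun ψ _ ↦ mul_comm (ψ n) (ψ (a : ZMod Q)⁻¹),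
    sum_char_inv_mul_char_eq ℂ haQ]
  simp only [eq_comm (a := (a : ZMod Q)), mul_ite, mul_zero, one_div_mul_eq_div]

theorem stmt_16 (q : ℕ) (hq : 3 ≤ q) (a n : ℕ) (ha : Nat.Coprime a q) (hn : 0 < n)
    (Q : ℕ) (hQ : Q ∣ q) (hQn : Nat.Coprime Q n)
    (hQmax : ∀ d, d ∣ q → Nat.Coprime d n → d ≤ Q) :
    (1 / (Nat.totient q : ℂ)) * ∑ χ : DirichletCharacter ℂ q,
        χ.primitiveCharacter (n : ZMod χ.conductor) * (starRingEnd ℂ) (χ (a : ZMod q))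
      = if (n : ZMod Q) = (a : ZMod Q)
          then (Nat.totient Q : ℂ) / (Nat.totient q : ℂ) else 0 :=
  stmt_16_general q hq a n ha Q hQ hQn hQmax
end

section
/- Let n be a positive integer and u, v, w distinct primes, each congruent to 5 modulo 6 and coprime to n. Then there exists an integer a' such that 4n ≡ (a' v² w²)³ (mod u²), 4n ≡ (a' u² w²)³ (mod v²), and 4n ≡ (a' u² v²)³ (mod w²). -/
/-!
For `p ≡ 5 (mod 6)` the group `(ℤ/p²ℤ)ˣ` has order `p(p - 1)`, prime to `3`, so cubing is a
bijection on it and every integer prime to `p` is a cube modulo `p²`. Hence modulo `u²` we can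
solve `4n ≡ (c_u v² w²)³` (as `v² w²` is invertible there), likewise modulo `v²` and `w²`, and
glue `c_u, c_v, c_w` into one integer `a'` by the Chinese remainder theorem.
-/

theorem ZMod.pow_surjective_units_of_coprime_totient {m k : ℕ} [NeZero m]
    (h : m.totient.Coprime k) : Function.Surjective fun x : (ZMod m)ˣ ↦ x ^ k := by
  rw [← ZMod.card_units_eq_totient, ← Nat.card_eq_fintype_card] at h
  exact (powCoprime h).surjective

theorem Nat.totient_prime_sq_coprime_three {p : ℕ} (hp : p.Prime) (hp3 : p % 3 = 2) :
    (p ^ 2).totient.Coprime 3 := by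
  rw [Nat.totient_prime_pow_succ hp, pow_one]
  have h3 : Nat.Prime 3 := Nat.prime_three
  refine Nat.Coprime.mul_left ?_ ?_
  · exact (Nat.coprime_primes hp h3).2 (by omega)
  · rw [Nat.coprime_comm, h3.coprime_iff_not_dvd]
    omega

theorem Int.exists_modEq_pow_mul_of_coprime_totient {m k : ℕ} [NeZero m]
    (h : m.totient.Coprime k) {a b : ℤ} (ha : IsCoprime a m) (hb : IsCoprime b m) :
    ∃ c : ℤ, a ≡ (c * b) ^ k [ZMOD m] := by
  set B := ZMod.unitOfIsCoprime b hb
  obtain ⟨y, hy⟩ := ZMod.pow_surjective_units_of_coprime_totient h (ZMod.unitOfIsCoprime a ha)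
  refine ⟨((y * B⁻¹ : (ZMod m)ˣ) : ZMod m).cast, ?_⟩
  have hyb : (((y * B⁻¹ : (ZMod m)ˣ) : ZMod m).cast : ℤ) * (b : ZMod m) = y := by
    rw [ZMod.intCast_zmod_cast, ← ZMod.coe_unitOfIsCoprime b hb, ← Units.val_mul,
      inv_mul_cancel_right]
  rw [← ZMod.intCast_eq_intCast_iff, Int.cast_pow, Int.cast_mul, hyb, ← Units.val_pow_eq_pow_val]
  exact congrArg Units.val hy.symm

theorem Int.exists_modEq_cube_mul_of_prime_sq {p : ℕ} (hp : p.Prime) (hp3 : p % 3 = 2)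
    {a b : ℤ} (ha : IsCoprime a p) (hb : IsCoprime b p) :
    ∃ c : ℤ, a ≡ (c * b) ^ 3 [ZMOD (p : ℤ) ^ 2] := by
  have : NeZero (p ^ 2) := ⟨pow_ne_zero 2 hp.ne_zero⟩
  have := Int.exists_modEq_pow_mul_of_coprime_totient (Nat.totient_prime_sq_coprime_three hp hp3)
    (a := a) (b := b) (by exact_mod_cast ha.pow_right) (by exact_mod_cast hb.pow_right)
  exact_mod_cast this

theorem IsCoprime.exists_intModEq {m₁ m₂ : ℤ} (h : IsCoprime m₁ m₂) (a₁ a₂ : ℤ) :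
    ∃ x, x ≡ a₁ [ZMOD m₁] ∧ x ≡ a₂ [ZMOD m₂] := by
  obtain ⟨s, t, hst⟩ := h
  refine ⟨a₁ * t * m₂ + a₂ * s * m₁, Int.modEq_iff_dvd.2 ⟨(a₁ - a₂) * s, ?_⟩,
    Int.modEq_iff_dvd.2 ⟨(a₂ - a₁) * t, ?_⟩⟩
  · linear_combination (-a₁) * hst
  · linear_combination (-a₂) * hst

theorem Int.exists_modEq_three {m₁ m₂ m₃ : ℤ} (h₁₂ : IsCoprime m₁ m₂) (h₁₃ : IsCoprime m₁ m₃)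
    (h₂₃ : IsCoprime m₂ m₃) (a₁ a₂ a₃ : ℤ) :
    ∃ x, x ≡ a₁ [ZMOD m₁] ∧ x ≡ a₂ [ZMOD m₂] ∧ x ≡ a₃ [ZMOD m₃] := by
  obtain ⟨y, hy₁, hy₂⟩ := h₁₂.exists_intModEq a₁ a₂
  obtain ⟨x, hxy, hx₃⟩ := (h₁₃.mul_left h₂₃).exists_intModEq y a₃
  exact ⟨x, (hxy.of_mul_right _).trans hy₁, (hxy.of_mul_left _).trans hy₂, hx₃⟩

theorem Int.isCoprime_of_prime_of_ne {p q : ℕ} (hp : p.Prime) (hq : q.Prime) (h : p ≠ q) :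
    IsCoprime (p : ℤ) q :=
  Nat.isCoprime_iff_coprime.2 ((Nat.coprime_primes hp hq).2 h)

theorem Int.isCoprime_four_mul {p n : ℕ} (hp : Odd p) (hpn : p.Coprime n) :
    IsCoprime (4 * n : ℤ) p := by
  have : (4 * n).Coprime p := ((Nat.coprime_two_left.2 hp).pow_left 2).mul_left hpn.symm
  exact_mod_cast Nat.isCoprime_iff_coprime.2 this

theorem stmt_18_general (n u v w : ℕ) (hu : u.Prime) (hv : v.Prime) (hw : w.Prime)
    (huv : u ≠ v) (huw : u ≠ w) (hvw : v ≠ w)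
    (hu5 : u % 6 = 5) (hv5 : v % 6 = 5) (hw5 : w % 6 = 5)
    (hun : u.Coprime n) (hvn : v.Coprime n) (hwn : w.Coprime n) :
    ∃ a' : ℤ,
      (4 * n : ℤ) ≡ (a' * (v : ℤ) ^ 2 * (w : ℤ) ^ 2) ^ 3 [ZMOD ((u : ℤ) ^ 2)] ∧
      (4 * n : ℤ) ≡ (a' * (u : ℤ) ^ 2 * (w : ℤ) ^ 2) ^ 3 [ZMOD ((v : ℤ) ^ 2)] ∧
      (4 * n : ℤ) ≡ (a' * (u : ℤ) ^ 2 * (v : ℤ) ^ 2) ^ 3 [ZMOD ((w : ℤ) ^ 2)] := by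
  have odd_of_mod_six {p : ℕ} (hp : p % 6 = 5) : Odd p := Nat.odd_iff.2 (by omega)
  have cop {p q : ℕ} (hp : p.Prime) (hq : q.Prime) (h : p ≠ q) :=
    Int.isCoprime_of_prime_of_ne hp hq h
  obtain ⟨cu, hcu⟩ := Int.exists_modEq_cube_mul_of_prime_sq hu (by omega)
    (Int.isCoprime_four_mul (odd_of_mod_six hu5) hun)
    (((cop hv hu huv.symm).pow_left).mul_left (cop hw hu huw.symm).pow_left)
  obtain ⟨cv, hcv⟩ := Int.exists_modEq_cube_mul_of_prime_sq hv (by omega)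
    (Int.isCoprime_four_mul (odd_of_mod_six hv5) hvn)
    (((cop hu hv huv).pow_left).mul_left (cop hw hv hvw.symm).pow_left)
  obtain ⟨cw, hcw⟩ := Int.exists_modEq_cube_mul_of_prime_sq hw (by omega)
    (Int.isCoprime_four_mul (odd_of_mod_six hw5) hwn)
    (((cop hu hw huw).pow_left).mul_left (cop hv hw hvw).pow_left)
  obtain ⟨a', hau, hav, haw⟩ := Int.exists_modEq_three (cop hu hv huv).pow (cop hu hw huw).pow
    (cop hv hw hvw).pow cu cv cw
  refine ⟨a', ?_, ?_, ?_⟩ <;> rw [mul_assoc]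
  · exact hcu.trans ((hau.mul_right _).pow 3).symm
  · exact hcv.trans ((hav.mul_right _).pow 3).symm
  · exact hcw.trans ((haw.mul_right _).pow 3).symm

theorem stmt_18 (n u v w : ℕ) (hn : 0 < n) (hu : u.Prime) (hv : v.Prime) (hw : w.Prime)
    (huv : u ≠ v) (huw : u ≠ w) (hvw : v ≠ w)
    (hu5 : u % 6 = 5) (hv5 : v % 6 = 5) (hw5 : w % 6 = 5)
    (hun : u.Coprime n) (hvn : v.Coprime n) (hwn : w.Coprime n) :
    ∃ a' : ℤ,
      (4 * n : ℤ) ≡ (a' * (v : ℤ) ^ 2 * (w : ℤ) ^ 2) ^ 3 [ZMOD ((u : ℤ) ^ 2)] ∧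
      (4 * n : ℤ) ≡ (a' * (u : ℤ) ^ 2 * (w : ℤ) ^ 2) ^ 3 [ZMOD ((v : ℤ) ^ 2)] ∧
      (4 * n : ℤ) ≡ (a' * (u : ℤ) ^ 2 * (v : ℤ) ^ 2) ^ 3 [ZMOD ((w : ℤ) ^ 2)] :=
  stmt_18_general n u v w hu hv hw huv huw hvw hu5 hv5 hw5 hun hvn hwn
end
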